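/- arXiv:1904.11861 — 4 statements merged into one kernel-verified Lean document; each statement's English description precedes it below -/
import Mathlib

section
/- Fix a ∈ (0,∞) and ε > 0. The function of ξ given by ((a+1)/(a+2+ε-(1+ε)ξ))^{a+1} - ξ has a unique zero ξ(a,ε) in the open interval (0,1). -/
/-!
Write `b = a + 1` and `k = 1 + ε`, so that the denominator is `b + k (1 - ξ)`. Taking logarithms,
the solutions in `(0, 1]` are the zeros of `g = logGap b k`, which is strictly convex: `-log` of an
affine function is convex and `-log` is strictly convex. As `g 1 = 0`, it has at most one further
zero in `(0, 1)`. It has one by the intermediate value theorem: `g → +∞` as `ξ → 0⁺`, and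
`g' 1 = k - 1 = ε > 0` makes `g` negative just left of `1`.
-/

open Real Set Filter Topology

theorem StrictConvexOn.eq_of_apply_eq_of_lt {𝕜 β : Type*} [Field 𝕜] [LinearOrder 𝕜]
    [IsStrictOrderedRing 𝕜] [AddCommMonoid β] [LinearOrder β] [IsOrderedAddMonoid β] [Module 𝕜 β]
    [PosSMulStrictMono 𝕜 β]
    {s : Set 𝕜} {f : 𝕜 → β} (hf : StrictConvexOn 𝕜 s f) {x y z : 𝕜} (hx : x ∈ s) (hy : y ∈ s)
    (hz : z ∈ s) (hxz : x < z) (hyz : y < z) (hfx : f x = f z) (hfy : f y = f z) : x = y := by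
  by_contra hne
  rcases lt_or_gt_of_ne hne with hxy | hyx
  · have := hf.lt_on_openSegment hx hz hxz.ne (by rw [openSegment_eq_Ioo hxz]; exact ⟨hxy, hyz⟩)
    simp_all
  · have := hf.lt_on_openSegment hy hz hyz.ne (by rw [openSegment_eq_Ioo hyz]; exact ⟨hyx, hxz⟩)
    simp_all

noncomputable def logGap (b k ξ : ℝ) : ℝ := b * log (b / (b + k * (1 - ξ))) - log ξ

section

variable {b k : ℝ}

theorem logGap_one : logGap b k 1 = 0 := by
  simp [logGap]

theorem rpow_eq_iff_logGap_eq_zero {ξ : ℝ} (hb : 0 < b) (hD : 0 < b + k * (1 - ξ)) (hξ : 0 < ξ) :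
    (b / (b + k * (1 - ξ))) ^ b = ξ ↔ logGap b k ξ = 0 := by
  rw [logGap, sub_eq_zero, ← log_rpow (div_pos hb hD)]
  exact (log_injOn_pos.eq_iff (rpow_pos_of_pos (div_pos hb hD) b) hξ).symm

theorem convexOn_log_div_add_mul (hb : 0 < b) (hk : 0 ≤ k) :
    ConvexOn ℝ (Ioc 0 1) fun ξ ↦ log (b / (b + k * (1 - ξ))) := by
  have hD : ∀ ξ ∈ Ioc (0 : ℝ) 1, 0 < b + k * (1 - ξ) := fun ξ hξ ↦ by nlinarith [hξ.2]
  refine ⟨convex_Ioc 0 1, fun x hx y hy α β hα hβ hαβ ↦ ?_⟩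
  have hconc := strictConcaveOn_log_Ioi.concaveOn.2 (hD x hx) (hD y hy) hα hβ hαβ
  simp only [smul_eq_mul] at hconc ⊢
  rw [log_div hb.ne' (hD x hx).ne', log_div hb.ne' (hD y hy).ne',
    log_div hb.ne' (hD (α * x + β * y) ((convex_Ioc 0 1) hx hy hα hβ hαβ)).ne']
  have hcomb : α * (b + k * (1 - x)) + β * (b + k * (1 - y)) = b + k * (1 - (α * x + β * y)) := by
    linear_combination (b + k) * hαβ
  rw [hcomb] at hconc
  linear_combination hconc - log b * hαβ

theorem strictConvexOn_logGap (hb : 0 < b) (hk : 0 ≤ k) :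
    StrictConvexOn ℝ (Ioc 0 1) (logGap b k) := by
  have := ((convexOn_log_div_add_mul hb hk).smul hb.le).add_strictConvexOn
    (strictConcaveOn_log_Ioi.neg.subset Ioc_subset_Ioi_self (convex_Ioc 0 1))
  exact this.congr fun ξ _ ↦ by simp [logGap, sub_eq_add_neg]

theorem continuousOn_logGap (hb : 0 < b) (hk : 0 ≤ k) : ContinuousOn (logGap b k) (Ioc 0 1) := by
  intro ξ hξ
  have hD : 0 < b + k * (1 - ξ) := by nlinarith [hξ.2]
  unfold logGap
  apply ContinuousAt.continuousWithinAt
  fun_prop (disch := first | exact hD.ne' | exact (div_pos hb hD).ne' | exact hξ.1.ne')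

theorem hasDerivAt_logGap_one (hb : b ≠ 0) : HasDerivAt (logGap b k) (k - 1) 1 := by
  have hD : HasDerivAt (fun ξ ↦ b + k * (1 - ξ)) (-k) 1 := by
    simpa using ((hasDerivAt_id (1 : ℝ)).const_sub 1).const_mul k |>.const_add b
  have hD1 : b + k * (1 - 1) ≠ 0 := by simpa using hb
  have := (((hasDerivAt_const (1 : ℝ) b).div hD hD1).log (div_ne_zero hb hD1)).const_mul b
    |>.sub (hasDerivAt_log one_ne_zero)
  refine this.congr_deriv ?_
  simp only [Pi.div_apply]
  field_simp
  ring

theorem exists_logGap_neg (hb : b ≠ 0) (hk : 1 < k) : ∃ r ∈ Ioo 0 1, logGap b k r < 0 := by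
  have hsign := eventually_nhdsWithin_sign_eq_of_deriv_pos
    (by rw [(hasDerivAt_logGap_one hb).deriv]; linarith) logGap_one
  obtain ⟨r, hr_sign, hrIoo⟩ :=
    ((hsign.filter_mono nhdsWithin_le_nhds).and (Ioo_mem_nhdsLT zero_lt_one)).exists
  refine ⟨r, hrIoo, ?_⟩
  rwa [sign_eq_neg_one_iff.2 (sub_neg.2 hrIoo.2), sign_eq_neg_one_iff] at hr_sign

theorem tendsto_logGap_nhdsGT_zero (hb : 0 < b) (hk : 0 ≤ k) :
    Tendsto (logGap b k) (𝓝[>] 0) atTop := by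
  have hD : 0 < b + k * (1 - 0) := by linarith
  have hcont : ContinuousAt (fun ξ ↦ b * log (b / (b + k * (1 - ξ)))) 0 := by
    fun_prop (disch := first | exact hD.ne' | exact (div_pos hb hD).ne')
  exact (hcont.tendsto.mono_left nhdsWithin_le_nhds).add_atTop
    (tendsto_neg_atBot_atTop.comp tendsto_log_nhdsGT_zero)

theorem existsUnique_logGap_eq_zero (hb : 0 < b) (hk : 1 < k) :
    ∃! ξ, ξ ∈ Ioo 0 1 ∧ logGap b k ξ = 0 := by
  have hk₀ : 0 ≤ k := by linarith
  obtain ⟨r, hr, hr_neg⟩ := exists_logGap_neg hb.ne' hk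
  obtain ⟨p, hp_pos, hp⟩ := ((tendsto_logGap_nhdsGT_zero hb hk₀).eventually_gt_atTop 0
    |>.and (Ioo_mem_nhdsGT hr.1)).exists
  have hcont : ContinuousOn (logGap b k) (Icc p r) :=
    (continuousOn_logGap hb hk₀).mono (Icc_subset_Ioc hp.1 hr.2.le)
  obtain ⟨ξ, hξ, hξ_zero⟩ := intermediate_value_Ioo' hp.2.le hcont ⟨hr_neg, hp_pos⟩
  have hξ₀₁ : ξ ∈ Ioo 0 1 := ⟨hp.1.trans hξ.1, hξ.2.trans hr.2⟩
  refine ⟨ξ, ⟨hξ₀₁, hξ_zero⟩, fun η ⟨hη, hη_zero⟩ ↦ ?_⟩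
  exact (strictConvexOn_logGap hb hk₀).eq_of_apply_eq_of_lt (Ioo_subset_Ioc_self hη)
    (Ioo_subset_Ioc_self hξ₀₁) (right_mem_Ioc.2 zero_lt_one) hη.2 hξ₀₁.2
    (hη_zero.trans logGap_one.symm) (hξ_zero.trans logGap_one.symm)

theorem existsUnique_rpow_div_add_mul_eq (hb : 0 < b) (hk : 1 < k) :
    ∃! ξ, ξ ∈ Ioo 0 1 ∧ (b / (b + k * (1 - ξ))) ^ b = ξ := by
  refine (existsUnique_congr fun ξ ↦ and_congr_right fun hξ ↦ ?_).2
    (existsUnique_logGap_eq_zero hb hk)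
  exact rpow_eq_iff_logGap_eq_zero hb (by nlinarith [hξ.2]) hξ.1

end

/-- For fixed `a, ε > 0`, the equation `((a+1)/(a+2+ε-(1+ε)ξ))^{a+1} = ξ`
has a unique solution `ξ` in the open interval `(0,1)`. -/
theorem fixed_point_unique (a ε : ℝ) (ha : 0 < a) (hε : 0 < ε) :
    ∃! ξ : ℝ, ξ ∈ Set.Ioo (0 : ℝ) 1 ∧
      ((a + 1) / (a + 2 + ε - (1 + ε) * ξ)) ^ (a + 1) = ξ := by
  have hD : ∀ ξ : ℝ, a + 2 + ε - (1 + ε) * ξ = (a + 1) + (1 + ε) * (1 - ξ) := fun ξ ↦ by ring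
  simp_rw [hD]
  exact existsUnique_rpow_div_add_mul_eq (by linarith) (by linarith)
end

section
/- Fix a ∈ (0,∞) and ε > 0, and let ξ ∈ (0,1) satisfy ξ = (1 + (1+ε)(1-ξ)/(a+1))^{-(a+1)}. Then 1 - ξ < 2ε, and consequently ρ := 1 - ξ^{a/(a+1)} satisfies 0 < ρ < 2ε. -/
/-!
Write `ψ = (1 + ε)(1 - ξ)`. Taking logarithms in the fixed-point equation and using
`log (1 + t) < t` gives `-log ξ = (a + 1) log (1 + ψ / (a + 1)) < ψ`, while the first two terms
of the series `-log (1 - x) = ∑ xⁿ⁺¹ / (n + 1)` give `(1 - ξ) + (1 - ξ)² / 2 ≤ -log ξ`.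
Dividing `(1 - ξ) + (1 - ξ)² / 2 < (1 + ε)(1 - ξ)` by `1 - ξ` yields `1 - ξ < 2ε`, and
`ξ ≤ ξ ^ (a / (a + 1)) < 1` transfers the bound to `ρ`.
-/

open Real

lemma add_sq_div_two_le_neg_log_one_sub {x : ℝ} (hx0 : 0 ≤ x) (hx1 : x < 1) :
    x + x ^ 2 / 2 ≤ -log (1 - x) := by
  have hseries := hasSum_pow_div_log_of_abs_lt_one (abs_lt.2 ⟨by linarith, hx1⟩)
  have hfirst_two := sum_le_hasSum (Finset.range 2) (fun n _ => by positivity) hseries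
  norm_num [Finset.sum_range_succ] at hfirst_two
  exact hfirst_two

lemma neg_log_one_add_div_rpow_neg_lt {c ψ : ℝ} (hc : 0 < c) (hψ : 0 < ψ) :
    -log ((1 + ψ / c) ^ (-c)) < ψ := by
  have hbase : 0 < 1 + ψ / c := by positivity
  rw [log_rpow hbase, neg_mul, neg_neg]
  calc c * log (1 + ψ / c) < c * (1 + ψ / c - 1) :=
        mul_lt_mul_of_pos_left (log_lt_sub_one_of_pos hbase (by simp [hc.ne', hψ.ne'])) hc
    _ = ψ := by field_simp; ring

lemma one_sub_rpow_mem_Ioc {x p : ℝ} (hx : x ∈ Set.Ioo (0 : ℝ) 1) (hp0 : 0 < p) (hp1 : p ≤ 1) :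
    1 - x ^ p ∈ Set.Ioc 0 (1 - x) := by
  obtain ⟨hx0, hx1⟩ := hx
  constructor
  · linarith [rpow_lt_one hx0.le hx1 hp0]
  · linarith [self_le_rpow_of_le_one hx0.le hx1.le hp1]

/-- If `ξ ∈ (0,1)` satisfies `ξ = (1 + (1+ε)(1-ξ)/(a+1))^{-(a+1)}`, then `1 - ξ < 2ε`,
and consequently `ρ := 1 - ξ^{a/(a+1)}` satisfies `0 < ρ < 2ε`. -/
theorem rho_lt_two_eps (a ε ξ : ℝ) (ha : 0 < a) (hε : 0 < ε)
    (hξ : ξ ∈ Set.Ioo (0 : ℝ) 1)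
    (hfix : ξ = (1 + (1 + ε) * (1 - ξ) / (a + 1)) ^ (-(a + 1))) :
    1 - ξ < 2 * ε ∧ 0 < 1 - ξ ^ (a / (a + 1)) ∧ 1 - ξ ^ (a / (a + 1)) < 2 * ε := by
  obtain ⟨hξ0, hξ1⟩ := hξ
  have hgap : 0 < 1 - ξ := by linarith
  have hupper : -log ξ < (1 + ε) * (1 - ξ) := by
    have h := neg_log_one_add_div_rpow_neg_lt (by linarith : 0 < a + 1)
      (by positivity : 0 < (1 + ε) * (1 - ξ))
    rwa [← hfix] at h
  have hlower : (1 - ξ) + (1 - ξ) ^ 2 / 2 ≤ -log ξ := by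
    simpa using add_sq_div_two_le_neg_log_one_sub hgap.le (by linarith : 1 - ξ < 1)
  have hmain : 1 - ξ < 2 * ε := by
    have h : (1 - ξ) * (1 - ξ) < (1 - ξ) * (2 * ε) := by linarith
    exact lt_of_mul_lt_mul_left h hgap.le
  obtain ⟨hρ_pos, hρ_le⟩ := one_sub_rpow_mem_Ioc (p := a / (a + 1)) ⟨hξ0, hξ1⟩ (by positivity)
    ((div_le_one (by linarith)).2 (by linarith))
  exact ⟨hmain, hρ_pos, hρ_le.trans_lt hmain⟩
end

section
/- If D ~ NB(a, p) with a ∈ (0,∞), p = (1+ε)/(a+2+ε), ε > 0, and ξ ∈ (0,1) satisfies E[D ξ^{D-1}] = ξ E[D], then ((a+1)/(a+2+ε-(1+ε)ξ))^{a+1} = ξ, and 1 - E[ξ^D] = 1 - ξ^{a/(a+1)}. -/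
open Finset

/-- The negative binomial probability mass function with shape `a` and probability `p`. -/
noncomputable def nbPMF (a p : ℝ) (r : ℕ) : ℝ :=
  (∏ j ∈ Finset.range r, (a + (j : ℝ))) / (Nat.factorial r : ℝ) * (1 - p) ^ a * p ^ r

/-! The probability generating function of `NB(a, p)` is `E[y^D] = q(y)^a` with
`q(y) = (1 - p) / (1 - p y)` (binomial series), and shifting the index gives
`E[D y^(D-1)] = E[D] q(y)^(a+1)`. So the fixed-point equation says `q(ξ)^(a+1) = ξ`, whence
`E[ξ^D] = q(ξ)^a = ξ^(a/(a+1))`; for this `p`, `q(ξ) = (a+1)/(a+2+ε-(1+ε)ξ)`. -/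

open scoped Nat

open Polynomial in
theorem Ring.choose_add_sub_one_eq_prod_div (a : ℝ) (n : ℕ) :
    Ring.choose (a + n - 1) n = (∏ j ∈ range n, (a + j)) / n ! := by
  rw [Ring.choose_eq_smul, ← aeval_eq_smeval, ← eval_map_algebraMap, descPochhammer_map,
    descPochhammer_eval_eq_prod_range, smul_eq_mul, inv_mul_eq_div, ← prod_range_reflect]
  congr 1
  refine prod_congr rfl fun j hj => ?_
  rw [Nat.sub_sub, Nat.cast_sub (by have := mem_range.mp hj; omega)]
  push_cast
  ring

theorem hasSum_prod_add_div_factorial_mul_pow {a x : ℝ} (hx : |x| < 1) :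
    HasSum (fun n => (∏ j ∈ range n, (a + j)) / n ! * x ^ n) ((1 - x) ^ (-a)) := by
  have h := (Real.one_div_one_sub_rpow_hasFPowerSeriesOnBall_zero a).hasSum
    (y := x) (by simpa [edist_dist] using hx)
  rw [Real.rpow_neg (by linarith [(abs_lt.mp hx).2])]
  simpa [FormalMultilinearSeries.ofScalars, Ring.choose_add_sub_one_eq_prod_div] using h

theorem nbPMF_eq (a p : ℝ) (k : ℕ) :
    nbPMF a p k = (1 - p) ^ a * ((∏ j ∈ range k, (a + j)) / k ! * p ^ k) := by
  rw [nbPMF]; ring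

theorem succ_mul_nbPMF_succ (a p : ℝ) (n : ℕ) :
    (n + 1) * nbPMF a p (n + 1)
      = a * p * (1 - p) ^ a * ((∏ j ∈ range n, (a + 1 + j)) / n ! * p ^ n) := by
  rw [nbPMF, prod_range_succ', Nat.factorial_succ]
  push_cast
  have : (n ! : ℝ) ≠ 0 := by positivity
  field_simp
  simp only [add_assoc, add_comm (1 : ℝ)]
  ring

theorem hasSum_pow_mul_nbPMF {a p y : ℝ} (hp : p < 1) (hpy : |p * y| < 1) :
    HasSum (fun k => y ^ k * nbPMF a p k) (((1 - p) / (1 - p * y)) ^ a) := by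
  have hpy' : 0 < 1 - p * y := by linarith [(abs_lt.mp hpy).2]
  have hterm : (fun k => y ^ k * nbPMF a p k)
      = fun k => (1 - p) ^ a * ((∏ j ∈ range k, (a + j)) / k ! * (p * y) ^ k) := by
    ext k
    rw [nbPMF_eq, mul_pow]
    ring
  rw [Real.div_rpow (by linarith) hpy'.le, div_eq_mul_inv, ← Real.rpow_neg hpy'.le, hterm]
  exact (hasSum_prod_add_div_factorial_mul_pow hpy).mul_left _

theorem hasSum_mul_pow_sub_one_mul_nbPMF {a p y : ℝ} (hp : p < 1) (hpy : |p * y| < 1) :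
    HasSum (fun k => k * y ^ (k - 1) * nbPMF a p k)
      (a * p / (1 - p) * ((1 - p) / (1 - p * y)) ^ (a + 1)) := by
  have hpy' : 0 < 1 - p * y := by linarith [(abs_lt.mp hpy).2]
  have hp' : 0 < 1 - p := by linarith
  have hterm : (fun n => ((n + 1 : ℕ) : ℝ) * y ^ (n + 1 - 1) * nbPMF a p (n + 1))
      = fun n => a * p * (1 - p) ^ a * ((∏ j ∈ range n, (a + 1 + j)) / n ! * (p * y) ^ n) := by
    ext n
    rw [Nat.add_sub_cancel, Nat.cast_succ, mul_right_comm, succ_mul_nbPMF_succ, mul_pow]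
    ring
  have hvalue : a * p / (1 - p) * ((1 - p) / (1 - p * y)) ^ (a + 1)
      = a * p * (1 - p) ^ a * (1 - p * y) ^ (-(a + 1)) := by
    rw [Real.div_rpow hp'.le hpy'.le, Real.rpow_add_one hp'.ne', Real.rpow_neg hpy'.le]
    field_simp
  rw [← hasSum_nat_add_iff' 1, sum_range_one, Nat.cast_zero, zero_mul, zero_mul, sub_zero,
    hterm, hvalue]
  exact (hasSum_prod_add_div_factorial_mul_pow hpy).mul_left _

theorem hasSum_mul_nbPMF {a p : ℝ} (hp : |p| < 1) :
    HasSum (fun k => k * nbPMF a p k) (a * p / (1 - p)) := by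
  have hp' : 1 - p ≠ 0 := by linarith [(abs_lt.mp hp).2]
  simpa [hp'] using hasSum_mul_pow_sub_one_mul_nbPMF (a := a) (y := 1) (abs_lt.mp hp).2
    (by rwa [mul_one])

/-- If `D ~ NB(a, p)` with `p = (1+ε)/(a+2+ε)` and `ξ ∈ (0,1)` satisfies
`E[D ξ^{D-1}] = ξ E[D]`, then `((a+1)/(a+2+ε-(1+ε)ξ))^{a+1} = ξ` and
`1 - E[ξ^D] = 1 - ξ^{a/(a+1)}`. -/
theorem nb_fixed_point (a ε ξ : ℝ) (ha : 0 < a) (hε : 0 < ε)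
    (p : ℝ) (hp : p = (1 + ε) / (a + 2 + ε))
    (hξ : ξ ∈ Set.Ioo (0 : ℝ) 1)
    (hfix : ∑' k : ℕ, (k : ℝ) * ξ ^ (k - 1) * nbPMF a p k
      = ξ * ∑' k : ℕ, (k : ℝ) * nbPMF a p k) :
    ((a + 1) / (a + 2 + ε - (1 + ε) * ξ)) ^ (a + 1) = ξ ∧
    1 - ∑' k : ℕ, ξ ^ k * nbPMF a p k = 1 - ξ ^ (a / (a + 1)) := by
  obtain ⟨hξ0, hξ1⟩ := hξ
  have hp0 : 0 < p := by rw [hp]; positivity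
  have hp1 : p < 1 := by rw [hp, div_lt_one (by positivity)]; linarith
  have hpξ : |p * ξ| < 1 := by rw [abs_of_pos (by positivity)]; nlinarith
  have hmean : a * p / (1 - p) ≠ 0 := (div_pos (by positivity) (by linarith)).ne'
  rw [(hasSum_mul_pow_sub_one_mul_nbPMF hp1 hpξ).tsum_eq,
    (hasSum_mul_nbPMF (abs_lt.mpr ⟨by linarith, hp1⟩)).tsum_eq, mul_comm ξ] at hfix
  rw [(hasSum_pow_mul_nbPMF hp1 hpξ).tsum_eq]
  set q := (1 - p) / (1 - p * ξ) with hq_def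
  have hq : (a + 1) / (a + 2 + ε - (1 + ε) * ξ) = q := by rw [hq_def, hp]; field_simp; ring
  have hq0 : 0 < q := div_pos (by linarith) (by nlinarith)
  have hroot : q ^ (a + 1) = ξ := mul_left_cancel₀ hmean hfix
  refine ⟨hq ▸ hroot, ?_⟩
  rw [← hroot, ← Real.rpow_mul hq0.le, mul_div_cancel₀ _ (by positivity)]
end

section
/- The unique solution of the initial value problem s'(t) = 2((2+α)s(t) - 2)²/(2t+α)², s(0) = 1, on the interval [0, α/(2(α+1))) is s(t) = (α - 2t)/(α - 2(α+1)t), and s(t) → ∞ as t → (α/(2(α+1)))⁻. -/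
open Set Filter Topology

/-!
Writing `u = (2 + α) s - 2`, the equation becomes the separable equation
`u' = u² g'` with `g t = -(2 + α) / (2t + α)`, so `u⁻¹ + g` is constant. Since `s' ≥ 0`,
`s ≥ s 0 = 1` and hence `u ≥ α > 0`, so `u⁻¹` is defined throughout; solving for `s` gives the
stated formula, whose denominator vanishes at `α / (2(α + 1))` while its numerator stays positive.
-/

theorem Convex.monotoneOn_of_hasDerivAt_nonneg {D : Set ℝ} (hD : Convex ℝ D) {f f' : ℝ → ℝ}
    (hf : ∀ x ∈ D, HasDerivAt f (f' x) x) (hf' : ∀ x ∈ D, 0 ≤ f' x) : MonotoneOn f D :=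
  monotoneOn_of_hasDerivWithinAt_nonneg hD
    (fun x hx => (hf x hx).continuousAt.continuousWithinAt)
    (fun x hx => (hf x (interior_subset hx)).hasDerivWithinAt)
    (fun x hx => hf' x (interior_subset hx))

theorem Convex.eq_of_hasDerivAt_zero {D : Set ℝ} (hD : Convex ℝ D) {f : ℝ → ℝ}
    (hf : ∀ x ∈ D, HasDerivAt f 0 x) {x y : ℝ} (hx : x ∈ D) (hy : y ∈ D) : f x = f y := by
  have h := hD.norm_image_sub_le_of_norm_hasDerivWithin_le (f' := fun _ => 0) (C := 0)
    (fun z hz => (hf z hz).hasDerivWithinAt) (fun _ _ => by simp) hx hy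
  simpa [sub_eq_zero, eq_comm] using h

theorem Convex.inv_add_eq_of_hasDerivAt_eq_sq_mul {D : Set ℝ} (hD : Convex ℝ D)
    {u g g' : ℝ → ℝ} (hu0 : ∀ t ∈ D, u t ≠ 0) (hu : ∀ t ∈ D, HasDerivAt u (u t ^ 2 * g' t) t)
    (hg : ∀ t ∈ D, HasDerivAt g (g' t) t) {x y : ℝ} (hx : x ∈ D) (hy : y ∈ D) :
    (u x)⁻¹ + g x = (u y)⁻¹ + g y := by
  refine hD.eq_of_hasDerivAt_zero (f := fun t => (u t)⁻¹ + g t) (fun t ht => ?_) hx hy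
  refine (((hu t ht).fun_inv (hu0 t ht)).fun_add (hg t ht)).congr_deriv ?_
  field_simp [hu0 t ht]
  ring

theorem Filter.Tendsto.div_nhdsGT_zero_atTop {l : Filter ℝ} {f g : ℝ → ℝ} {C : ℝ} (hC : 0 < C)
    (hf : Tendsto f l (𝓝 C)) (hg : Tendsto g l (𝓝[>] 0)) :
    Tendsto (fun x => f x / g x) l atTop := by
  simpa only [div_eq_mul_inv, Pi.inv_apply] using hf.pos_mul_atTop hC hg.inv_tendsto_nhdsGT_zero

theorem hasDerivAt_const_div_mul_add (a b c : ℝ) {t : ℝ} (ht : a * t + b ≠ 0) :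
    HasDerivAt (fun t => c / (a * t + b)) (-(c * a) / (a * t + b) ^ 2) t := by
  refine ((((hasDerivAt_id t).const_mul a).add_const b).fun_inv ht |>.const_mul c).congr_deriv ?_
  simp only [id, mul_one]
  ring

theorem sub_mul_pos_of_lt_div {α t : ℝ} (hα : 0 < α) (ht : t < α / (2 * (α + 1))) :
    0 < α - 2 * (α + 1) * t := by
  have := (lt_div_iff₀ (by positivity : (0 : ℝ) < 2 * (α + 1))).mp ht
  linarith

theorem eq_sub_div_sub_of_inv_add_eq {α t σ : ℝ} (hα : 0 < α) (ht : 0 ≤ t)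
    (hden : α - 2 * (α + 1) * t ≠ 0) (hσ : (2 + α) * σ - 2 ≠ 0)
    (h : ((2 + α) * σ - 2)⁻¹ + -(2 + α) / (2 * t + α) = α⁻¹ + -(2 + α) / α) :
    σ = (α - 2 * t) / (α - 2 * (α + 1) * t) := by
  have h2t : 2 * t + α ≠ 0 := by positivity
  rw [eq_div_iff hden]
  field_simp at h
  refine mul_left_cancel₀ (by positivity : (2 + α : ℝ) ≠ 0) ?_
  linear_combination -h

theorem tendsto_sub_div_sub_nhdsLT_atTop {α : ℝ} (hα : 0 < α) :
    Tendsto (fun t => (α - 2 * t) / (α - 2 * (α + 1) * t)) (𝓝[<] (α / (2 * (α + 1)))) atTop := by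
  set T := α / (2 * (α + 1))
  have hnum : 0 < α - 2 * T := by
    have : α - 2 * T = α ^ 2 / (α + 1) := by simp only [T]; field_simp; ring
    rw [this]; positivity
  have hden : α - 2 * (α + 1) * T = 0 := by simp only [T]; field_simp; ring
  refine Tendsto.div_nhdsGT_zero_atTop hnum ?_ ?_
  · exact (Continuous.tendsto (by fun_prop) T).mono_left nhdsWithin_le_nhds
  · refine tendsto_nhdsWithin_of_tendsto_nhds_of_eventually_within _ ?_ ?_
    · simpa only [hden] using
        (Continuous.tendsto (by fun_prop : Continuous fun t : ℝ => α - 2 * (α + 1) * t) T).mono_left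
          nhdsWithin_le_nhds
    · filter_upwards [self_mem_nhdsWithin] with t (ht : t < T)
      exact sub_mul_pos_of_lt_div hα ht

/-- The unique solution of `s'(t) = 2((2+α)s(t)-2)²/(2t+α)²` with `s(0) = 1` on
`[0, α/(2(α+1)))` is `s(t) = (α-2t)/(α-2(α+1)t)`, and `s(t) → ∞` as
`t → (α/(2(α+1)))⁻`. -/
theorem susceptibility_ode (α : ℝ) (hα : 0 < α) (s : ℝ → ℝ)
    (hderiv : ∀ t ∈ Set.Ico (0 : ℝ) (α / (2 * (α + 1))),
      HasDerivAt s (2 * ((2 + α) * s t - 2) ^ 2 / (2 * t + α) ^ 2) t)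
    (h0 : s 0 = 1) :
    (∀ t ∈ Set.Ico (0 : ℝ) (α / (2 * (α + 1))),
      s t = (α - 2 * t) / (α - 2 * (α + 1) * t)) ∧
    Filter.Tendsto s
      (nhdsWithin (α / (2 * (α + 1))) (Set.Ico (0 : ℝ) (α / (2 * (α + 1)))))
      Filter.atTop := by
  set D := Ico (0 : ℝ) (α / (2 * (α + 1)))
  have hD0 : 0 ∈ D := ⟨le_rfl, by positivity⟩
  have hs1 : ∀ t ∈ D, 1 ≤ s t := fun t ht => h0 ▸
    (convex_Ico _ _).monotoneOn_of_hasDerivAt_nonneg hderiv (fun _ _ => by positivity) hD0 ht ht.1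
  have hu0 : ∀ t ∈ D, (2 + α) * s t - 2 ≠ 0 := fun t ht => by nlinarith [hs1 t ht]
  have hu : ∀ t ∈ D, HasDerivAt (fun t => (2 + α) * s t - 2)
      (((2 + α) * s t - 2) ^ 2 * (2 * (2 + α) / (2 * t + α) ^ 2)) t := fun t ht =>
    (((hderiv t ht).const_mul (2 + α)).sub_const 2).congr_deriv (by ring)
  have hg : ∀ t ∈ D, HasDerivAt (fun t => -(2 + α) / (2 * t + α))
      (2 * (2 + α) / (2 * t + α) ^ 2) t := fun t ht =>
    (hasDerivAt_const_div_mul_add 2 α _ (by linarith [ht.1])).congr_deriv (by ring)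
  have hsol : ∀ t ∈ D, s t = (α - 2 * t) / (α - 2 * (α + 1) * t) := fun t ht => by
    have h := (convex_Ico _ _).inv_add_eq_of_hasDerivAt_eq_sq_mul hu0 hu hg ht hD0
    simp only [h0, mul_one, mul_zero, zero_add, add_sub_cancel_left] at h
    exact eq_sub_div_sub_of_inv_add_eq hα ht.1 (sub_mul_pos_of_lt_div hα ht.2).ne' (hu0 t ht) h
  refine ⟨hsol, ?_⟩
  refine ((tendsto_sub_div_sub_nhdsLT_atTop hα).mono_left
    (nhdsWithin_mono _ Ico_subset_Iio_self)).congr' ?_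
  exact (eventually_nhdsWithin_of_forall hsol).mono fun t ht => ht.symm
end
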